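/- arXiv:1204.1228 — 2 statements merged into one kernel-verified Lean document; each statement's English description precedes it below -/
import Mathlib

section
/- Let f : ℂⁿ → ℂᵐ be given by polynomials f₁, …, fₘ with rational coefficients. Suppose p ∈ ℂⁿ is a generic point (its coordinates are algebraically independent over ℚ) and the Jacobian matrix df|ₚ has rank m. Then f(p) is a generic point in ℂᵐ, i.e., the coordinates of f(p) are algebraically independent over ℚ. -/
/-!
Among the rational polynomials vanishing at `f(p)`, take one, `Q`, of least degree. Since `p` is
generic, `Q ∘ f` vanishes identically, so by the chain rule the gradient of `Q` at `f(p)` is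
annihilated by `df|ₚ`; full row rank forces every `∂Q/∂yᵢ` to vanish at `f(p)`. These have smaller
degree, hence are zero, and in characteristic zero this makes `Q` a constant, which must be `0`.
-/

open MvPolynomial

/-- The Jacobian matrix at `p ∈ ℂⁿ` of the polynomial map `ℂⁿ → ℂᵐ` given by
rational polynomials `F 0, …, F (m−1)`. -/
noncomputable def jacobianAt {n m : ℕ} (F : Fin m → MvPolynomial (Fin n) ℚ)
    (p : Fin n → ℂ) : Matrix (Fin m) (Fin n) ℂ :=
  Matrix.of fun i j => aeval p (pderiv j (F i))

theorem Matrix.vecMul_injective_of_rank_eq_card {K m n : Type*} [Field K] [Fintype m] [Fintype n]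
    {A : Matrix m n K} (h : A.rank = Fintype.card m) : Function.Injective A.vecMul := by
  rw [Matrix.vecMul_injective_iff, linearIndependent_iff_card_eq_finrank_span, Set.finrank,
    ← rank_eq_finrank_span_row, h]

theorem Derivation.map_aeval_mvPolynomial {R A M σ : Type*} [CommSemiring R] [CommSemiring A]
    [Algebra R A] [AddCommMonoid M] [Module A M] [Module R M] [IsScalarTower R A M] [Fintype σ]
    (D : Derivation R A M) (x : σ → A) (Q : MvPolynomial σ R) :
    D (aeval x Q) = ∑ i, aeval x (pderiv i Q) • D (x i) := by
  classical
  induction Q using MvPolynomial.induction_on with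
  | C a => simp
  | add P Q hP hQ => simp only [map_add, hP, hQ, add_smul, Finset.sum_add_distrib]
  | mul_X P k hP =>
    simp only [map_mul, aeval_X, Derivation.leibniz, hP, pderiv_X, smul_eq_mul, map_add,
      add_smul, Finset.sum_add_distrib, Finset.smul_sum, mul_smul]
    simp [Pi.single_apply]

namespace MvPolynomial

variable {R σ : Type*}

theorem totalDegree_pderiv_le [CommSemiring R] (i : σ) (Q : MvPolynomial σ R) :
    (pderiv i Q).totalDegree ≤ Q.totalDegree - 1 := by
  classical
  refine Finset.sup_le fun d hd => ?_
  have hcoeff : d + Finsupp.single i 1 ∈ Q.support := by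
    rw [mem_support_iff, coeff_pderiv] at hd
    exact mem_support_iff.mpr (left_ne_zero_of_mul hd)
  have hdeg := le_totalDegree hcoeff
  rw [Finsupp.sum_add_index' (fun _ => rfl) (fun _ _ _ => rfl),
    Finsupp.sum_single_index rfl] at hdeg
  omega

theorem eq_C_of_forall_pderiv_eq_zero [CommRing R] [IsAddTorsionFree R] {Q : MvPolynomial σ R}
    (h : ∀ i, pderiv i Q = 0) : Q = C (Q.coeff 0) := by
  classical
  ext d
  rcases eq_or_ne d 0 with rfl | hd
  · simp
  obtain ⟨i, hi⟩ : ∃ i, d i ≠ 0 := by simpa [Finsupp.ext_iff] using hd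
  have hsplit : d - Finsupp.single i 1 + Finsupp.single i 1 = d :=
    tsub_add_cancel_of_le (Finsupp.single_le_iff.mpr (Nat.one_le_iff_ne_zero.mpr hi))
  have hzero := coeff_pderiv (i := i) Q (d - Finsupp.single i 1)
  rw [h i, coeff_zero, hsplit, eq_comm, mul_comm, ← Nat.cast_succ, ← nsmul_eq_mul,
    smul_eq_zero] at hzero
  rw [coeff_C, if_neg (Ne.symm hd)]
  exact hzero.resolve_left (Nat.succ_ne_zero _)

theorem algebraicIndependent_of_aeval_pderiv_eq_zero {A : Type*} [CommRing R] [IsAddTorsionFree R]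
    [CommRing A] [Algebra R A] [FaithfulSMul R A] {x : σ → A}
    (h : ∀ Q : MvPolynomial σ R, aeval x Q = 0 → ∀ i, aeval x (pderiv i Q) = 0) :
    AlgebraicIndependent R x := by
  rw [algebraicIndependent_iff]
  intro Q
  induction hd : Q.totalDegree using Nat.strong_induction_on generalizing Q with
  | _ d ih =>
  intro hQ
  have hconst : Q = C (Q.coeff 0) := by
    rcases Nat.eq_zero_or_pos d with rfl | hpos
    · exact totalDegree_eq_zero_iff_eq_C.mp hd
    · refine eq_C_of_forall_pderiv_eq_zero fun i => ih _ ?_ _ rfl (h Q hQ i)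
      have hdeg := totalDegree_pderiv_le i Q
      omega
  rw [hconst, aeval_C, FaithfulSMul.algebraMap_eq_zero_iff] at hQ
  rw [hconst, hQ, map_zero]

end MvPolynomial

theorem aeval_pderiv_eq_zero_of_rank_jacobianAt {n m : ℕ} {F : Fin m → MvPolynomial (Fin n) ℚ}
    {p : Fin n → ℂ} (hp : AlgebraicIndependent ℚ p) (hrank : (jacobianAt F p).rank = m)
    {Q : MvPolynomial (Fin m) ℚ} (hQ : aeval (fun i => aeval p (F i)) Q = 0) (i : Fin m) :
    aeval (fun i => aeval p (F i)) (pderiv i Q) = 0 := by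
  have hcomp (P : MvPolynomial (Fin m) ℚ) :
      aeval (fun i => aeval p (F i)) P = aeval p (aeval F P) :=
    (comp_aeval_apply (f := F) (aeval p) P).symm
  have hFQ : aeval F Q = 0 :=
    algebraicIndependent_iff_injective_aeval.mp hp (by rw [map_zero, ← hcomp, hQ])
  have hvec : (jacobianAt F p).vecMul (fun i => aeval (fun i => aeval p (F i)) (pderiv i Q)) =
      (jacobianAt F p).vecMul 0 := by
    funext j
    have hchain := congrArg (aeval p) ((pderiv j).map_aeval_mvPolynomial F Q)
    rw [hFQ, map_zero, map_zero, map_sum] at hchain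
    simpa [Matrix.vecMul, dotProduct, jacobianAt, hcomp] using hchain.symm
  exact congrFun (Matrix.vecMul_injective_of_rank_eq_card (by simpa using hrank) hvec) i

/-- If `p ∈ ℂⁿ` is generic (its coordinates are algebraically independent over `ℚ`)
and the Jacobian of the rational polynomial map `f : ℂⁿ → ℂᵐ` at `p` has rank `m`,
then `f(p)` is a generic point of `ℂᵐ`. -/
theorem image_of_generic_is_generic {n m : ℕ} (F : Fin m → MvPolynomial (Fin n) ℚ)
    (p : Fin n → ℂ) (hp : AlgebraicIndependent ℚ p)
    (hrank : (jacobianAt F p).rank = m) :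
    AlgebraicIndependent ℚ (fun i => aeval p (F i)) :=
  algebraicIndependent_of_aeval_pderiv_eq_zero fun _ hQ =>
    aeval_pderiv_eq_zero_of_rank_jacobianAt hp hrank hQ
end

section
/- Let (G₁, G₂) be a 2-separation of a rigid graph G with V(G₁) ∩ V(G₂) = {v₁, v₂}, and suppose G₂ is not rigid. Let F be a spanning isostatic subgraph of G. Then |E(F) ∩ E(G₁)| = 2|V(G₁)| − 3 and |E(F) ∩ E(G₂)| = 2|V(G₂)| − 4; in particular G₁ is rigid. -/
/-!
Fix a realisation `p` of `V` witnessing the rigidity of the spanning isostatic subgraph `F`, and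
split `E(F)` into `Tᵢ = E(F) ∩ E(Gᵢ)`. The rows of the rigidity matrix are orthogonal to the three
trivial motions of `p`, so any set of edges on `n` vertices has rank at most `2n - 3`; for the
non-rigid `G₂` the rank is at most `2|V(G₂)| - 4`. Hence
`2|V| - 3 = rank E(F) ≤ rank T₁ + rank T₂ ≤ (2|V(G₁)| - 3) + (2|V(G₂)| - 4) = 2|V| - 3`,
and since also `rank Tᵢ ≤ |Tᵢ|` with `|T₁| + |T₂| = |E(F)| = 2|V| - 3`, every inequality is
an equality.
-/

/-- The rigidity-matrix row vector associated to a pair `u, v` in a real realisation. -/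
def rigidityVec {W : Type*} [DecidableEq W] (p : W → Fin 2 → ℝ) (u v : W) :
    W × Fin 2 → ℝ :=
  fun x => if x.1 = u then p u x.2 - p v x.2
    else if x.1 = v then p v x.2 - p u x.2 else 0

/-- A graph is rigid (in `ℝ²`) if the rows of the rigidity matrix of some (equivalently,
any generic) real realisation span a space of dimension `2|W| − 3`. -/
def GraphRigid {W : Type*} [DecidableEq W] (G : SimpleGraph W) : Prop :=
  ∃ p : W → Fin 2 → ℝ,
    Module.finrank ℝ (Submodule.span ℝ
      {w : W × Fin 2 → ℝ | ∃ u v : W, G.Adj u v ∧ w = rigidityVec p u v})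
      = 2 * Nat.card W - 3

open Module Submodule

section RigidityRank

variable {W : Type*}

/-- The velocities of `p` under the two unit translations and the infinitesimal rotation about
the origin. -/
def trivialVelocity (p : W → Fin 2 → ℝ) : Fin 3 → W → Fin 2 → ℝ :=
  ![fun _ => Pi.single 0 1, fun _ => Pi.single 1 1, fun x => ![-p x 1, p x 0]]

lemma linearIndependent_trivialVelocity {p : W → Fin 2 → ℝ} {a b : W} (hab : p a ≠ p b) :
    LinearIndependent ℝ (fun i (x : W × Fin 2) => trivialVelocity p i x.1 x.2) := by
  rw [Fintype.linearIndependent_iff]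
  intro g hg
  have eval : ∀ x : W × Fin 2, ∑ i, g i * trivialVelocity p i x.1 x.2 = 0 := fun x => by
    simpa using congrFun hg x
  have ha0 : g 0 - g 2 * p a 1 = 0 := by
    simpa [Fin.sum_univ_three, trivialVelocity, sub_eq_add_neg] using eval (a, 0)
  have ha1 : g 1 + g 2 * p a 0 = 0 := by
    simpa [Fin.sum_univ_three, trivialVelocity] using eval (a, 1)
  have hb0 : g 0 - g 2 * p b 1 = 0 := by
    simpa [Fin.sum_univ_three, trivialVelocity, sub_eq_add_neg] using eval (b, 0)
  have hb1 : g 1 + g 2 * p b 0 = 0 := by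
    simpa [Fin.sum_univ_three, trivialVelocity] using eval (b, 1)
  have hg2 : g 2 = 0 := by
    rcases Fin.exists_fin_two.1 (Function.ne_iff.1 hab) with hj | hj
    · refine (mul_eq_zero.1 ?_).resolve_right (sub_ne_zero.2 hj)
      linear_combination ha1 - hb1
    · refine (mul_eq_zero.1 ?_).resolve_right (sub_ne_zero.2 hj)
      linear_combination hb0 - ha0
  have hg0 : g 0 = 0 := by linear_combination ha0 + p a 1 * hg2
  have hg1 : g 1 = 0 := by linear_combination ha1 - p a 0 * hg2
  intro i
  fin_cases i
  exacts [hg0, hg1, hg2]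

variable [DecidableEq W]

lemma rigidityVec_comm (p : W → Fin 2 → ℝ) (u v : W) :
    rigidityVec p u v = rigidityVec p v u := by
  funext x
  unfold rigidityVec
  split_ifs <;> simp_all

lemma rigidityVec_self (p : W → Fin 2 → ℝ) (u : W) : rigidityVec p u u = 0 := by
  funext x
  simp [rigidityVec]

lemma rigidityVec_dotProduct [Fintype W] (p q : W → Fin 2 → ℝ) (u v : W) :
    rigidityVec p u v ⬝ᵥ (fun x => q x.1 x.2) = ∑ j, (p u j - p v j) * (q u j - q v j) := by
  by_cases huv : u = v
  · subst huv
    simp [rigidityVec_self]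
  rw [dotProduct, Fintype.sum_prod_type, Fintype.sum_eq_add u v huv]
  · simp only [rigidityVec, ↓reduceIte, Fin.sum_univ_two, Ne.symm huv]
    ring
  · rintro y ⟨hyu, hyv⟩
    simp [rigidityVec, hyu, hyv]

lemma rigidityVec_dotProduct_trivialVelocity [Fintype W] (p : W → Fin 2 → ℝ) (u v : W)
    (i : Fin 3) : rigidityVec p u v ⬝ᵥ (fun x => trivialVelocity p i x.1 x.2) = 0 := by
  rw [rigidityVec_dotProduct]
  fin_cases i
  · simp [trivialVelocity]
  · simp [trivialVelocity]
  · simp only [trivialVelocity, Fin.reduceFinMk, Matrix.cons_val, Fin.sum_univ_two, sub_neg_eq_add]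
    ring

def edgeRow (p : W → Fin 2 → ℝ) : Sym2 W → W × Fin 2 → ℝ :=
  Sym2.lift ⟨rigidityVec p, rigidityVec_comm p⟩

@[simp]
lemma edgeRow_mk (p : W → Fin 2 → ℝ) (u v : W) : edgeRow p s(u, v) = rigidityVec p u v := rfl

noncomputable def rigidityRank (p : W → Fin 2 → ℝ) (S : Set (Sym2 W)) : ℕ :=
  finrank ℝ (span ℝ (edgeRow p '' S))

lemma graphRigid_iff (H : SimpleGraph W) :
    GraphRigid H ↔ ∃ p, rigidityRank p H.edgeSet = 2 * Nat.card W - 3 := by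
  suffices h : ∀ p : W → Fin 2 → ℝ,
      {w | ∃ u v, H.Adj u v ∧ w = rigidityVec p u v} = edgeRow p '' H.edgeSet from
    exists_congr fun p => by rw [rigidityRank, ← h]
  intro p
  ext w
  constructor
  · rintro ⟨u, v, huv, rfl⟩
    exact ⟨s(u, v), huv, rfl⟩
  · rintro ⟨e, he, rfl⟩
    induction e using Sym2.ind with
    | _ u v => exact ⟨u, v, he, rfl⟩

lemma rigidityRank_mono [Finite W] (p : W → Fin 2 → ℝ) {S T : Set (Sym2 W)} (h : S ⊆ T) :
    rigidityRank p S ≤ rigidityRank p T :=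
  finrank_mono (span_mono (Set.image_mono h))

lemma rigidityRank_union_le [Finite W] (p : W → Fin 2 → ℝ) (S T : Set (Sym2 W)) :
    rigidityRank p (S ∪ T) ≤ rigidityRank p S + rigidityRank p T := by
  rw [rigidityRank, Set.image_union, span_union]
  exact finrank_add_le_finrank_add_finrank _ _

lemma rigidityRank_le_ncard (p : W → Fin 2 → ℝ) {S : Set (Sym2 W)} (hS : S.Finite) :
    rigidityRank p S ≤ S.ncard := by
  have := (hS.image (edgeRow p)).fintype
  calc rigidityRank p S ≤ (edgeRow p '' S).toFinset.card := finrank_span_le_card _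
    _ = (edgeRow p '' S).ncard := (Set.ncard_eq_toFinset_card' _).symm
    _ ≤ S.ncard := Set.ncard_image_le hS

lemma rigidityRank_le [Finite W] (p : W → Fin 2 → ℝ) (S : Set (Sym2 W)) :
    rigidityRank p S ≤ 2 * Nat.card W - 3 := by
  cases nonempty_fintype W
  by_cases hp : ∀ a b, p a = p b
  · have hzero : span ℝ (edgeRow p '' S) = ⊥ := by
      rw [span_eq_bot]
      rintro _ ⟨e, -, rfl⟩
      induction e using Sym2.ind with
      | _ u v => funext x; simp [rigidityVec, hp u v]
    rw [rigidityRank, hzero, finrank_bot]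
    exact Nat.zero_le _
  obtain ⟨a, b, hab⟩ : ∃ a b, p a ≠ p b := by simpa using hp
  set T : Matrix (Fin 3) (W × Fin 2) ℝ := Matrix.of fun i x => trivialVelocity p i x.1 x.2
  have hT : T.rank = 3 := (linearIndependent_trivialVelocity hab).rank_matrix (M := T)
  have hker : span ℝ (edgeRow p '' S) ≤ LinearMap.ker T.mulVecLin := by
    rw [span_le]
    rintro _ ⟨e, -, rfl⟩
    induction e using Sym2.ind with
    | _ u v =>
      ext i
      simpa [T, Matrix.mulVec, dotProduct_comm] using
        rigidityVec_dotProduct_trivialVelocity p u v i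
  have hdim := T.mulVecLin.finrank_range_add_finrank_ker
  have hmono := finrank_mono hker
  rw [Matrix.rank] at hT
  simp only [finrank_fintype_fun_eq_card, Fintype.card_prod, Fintype.card_fin] at hdim
  rw [rigidityRank, Nat.card_eq_fintype_card]
  omega

lemma extend_rigidityVec_comp {V : Type*} [DecidableEq V] {ι : W → V} (hι : ι.Injective)
    (p : V → Fin 2 → ℝ) (u v : W) :
    Function.extend (Prod.map ι (id : Fin 2 → Fin 2)) (rigidityVec (p ∘ ι) u v) 0 =
      rigidityVec p (ι u) (ι v) := by
  funext ⟨y, j⟩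
  by_cases hy : ∃ x, ι x = y
  · obtain ⟨x, rfl⟩ := hy
    rw [show (ι x, j) = Prod.map ι id (x, j) from rfl,
      (hι.prodMap Function.injective_id).extend_apply]
    simp [rigidityVec, hι.eq_iff]
  · rw [Function.extend_apply' _ _ _ (by simpa using hy)]
    simp only [not_exists] at hy
    simp [rigidityVec, Ne.symm (hy u), Ne.symm (hy v)]

lemma rigidityRank_comp {V : Type*} [DecidableEq V] {ι : W → V} (hι : ι.Injective)
    (p : V → Fin 2 → ℝ) (S : Set (Sym2 W)) :
    rigidityRank (p ∘ ι) S = rigidityRank p (Sym2.map ι '' S) := by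
  let E := Function.ExtendByZero.linearMap ℝ (Prod.map ι (id : Fin 2 → Fin 2))
  have hE : Function.Injective E :=
    Function.extend_injective (hι.prodMap Function.injective_id) (0 : V × Fin 2 → ℝ)
  have himage : E '' (edgeRow (p ∘ ι) '' S) = edgeRow p '' (Sym2.map ι '' S) := by
    simp only [Set.image_image]
    refine Set.image_congr fun e _ => ?_
    induction e using Sym2.ind with
    | _ u v => exact extend_rigidityVec_comp hι p u v
  rw [rigidityRank, rigidityRank, ← himage, span_image]
  exact LinearEquiv.finrank_eq (equivMapOfInjective E hE _)

end RigidityRank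

namespace SimpleGraph.Subgraph

variable {V : Type*} {G : SimpleGraph V}

section TwoSeparation

variable {G₁ G₂ : G.Subgraph}

lemma ncard_verts_add_ncard_verts [Finite V] (hunion : G₁ ⊔ G₂ = ⊤) {v₁ v₂ : V} (hv : v₁ ≠ v₂)
    (hsep : G₁.verts ∩ G₂.verts = {v₁, v₂}) :
    G₁.verts.ncard + G₂.verts.ncard = Nat.card V + 2 := by
  rw [← Set.ncard_union_add_ncard_inter, ← verts_sup, hunion, verts_top, Set.ncard_univ, hsep,
    Set.ncard_pair hv]

lemma inter_edgeSet_union_inter_edgeSet (F : G.Subgraph) (hunion : G₁ ⊔ G₂ = ⊤) :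
    F.edgeSet ∩ G₁.edgeSet ∪ F.edgeSet ∩ G₂.edgeSet = F.edgeSet := by
  rw [← Set.inter_union_distrib_left, ← edgeSet_sup, hunion, edgeSet_top,
    Set.inter_eq_left.2 F.edgeSet_subset]

lemma ncard_inter_edgeSet_add_ncard_inter_edgeSet [Finite V] (F : G.Subgraph)
    (hunion : G₁ ⊔ G₂ = ⊤) (hedisj : Disjoint G₁.edgeSet G₂.edgeSet) :
    (F.edgeSet ∩ G₁.edgeSet).ncard + (F.edgeSet ∩ G₂.edgeSet).ncard = F.edgeSet.ncard := by
  rw [← Set.ncard_union_eq (hedisj.mono Set.inter_subset_right Set.inter_subset_right),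
    inter_edgeSet_union_inter_edgeSet F hunion]

end TwoSeparation

variable [DecidableEq V]

lemma graphRigid_coe_iff (H : G.Subgraph) :
    GraphRigid H.coe ↔ ∃ p : V → Fin 2 → ℝ, rigidityRank p H.edgeSet = 2 * H.verts.ncard - 3 := by
  rw [graphRigid_iff, Nat.card_coe_set_eq, ← H.image_coe_edgeSet_coe]
  constructor
  · rintro ⟨q, hq⟩
    refine ⟨Function.extend (↑) q 0, ?_⟩
    rwa [← rigidityRank_comp Subtype.val_injective, Function.extend_comp Subtype.val_injective]
  · rintro ⟨p, hp⟩
    exact ⟨p ∘ (↑), by rwa [rigidityRank_comp Subtype.val_injective]⟩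

lemma rigidityRank_edgeSet_le [Finite V] (H : G.Subgraph) (p : V → Fin 2 → ℝ) :
    rigidityRank p H.edgeSet ≤ 2 * H.verts.ncard - 3 := by
  rw [← H.image_coe_edgeSet_coe, ← rigidityRank_comp Subtype.val_injective, ← Nat.card_coe_set_eq]
  exact rigidityRank_le _ _

end SimpleGraph.Subgraph

open SimpleGraph Subgraph

theorem two_separation_nonrigid_side_count_general {V : Type*} [Fintype V] [DecidableEq V]
    (G : SimpleGraph V) (G₁ G₂ : G.Subgraph)
    (hunion : G₁ ⊔ G₂ = ⊤)
    (hedisj : Disjoint G₁.edgeSet G₂.edgeSet)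
    (v₁ v₂ : V) (hv : v₁ ≠ v₂) (hsep : G₁.verts ∩ G₂.verts = {v₁, v₂})
    (hG2 : ¬ GraphRigid G₂.coe)
    (F : G.Subgraph) (hFspan : F.verts = Set.univ)
    (hFrigid : GraphRigid F.coe)
    (hFiso : F.edgeSet.ncard = 2 * Fintype.card V - 3) :
    (F.edgeSet ∩ G₁.edgeSet).ncard = 2 * G₁.verts.ncard - 3 ∧
      (F.edgeSet ∩ G₂.edgeSet).ncard = 2 * G₂.verts.ncard - 4 ∧
      GraphRigid G₁.coe := by
  have hverts := ncard_verts_add_ncard_verts hunion hv hsep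
  rw [Nat.card_eq_fintype_card] at hverts
  have hG₁verts : 2 ≤ G₁.verts.ncard := by
    rw [← Set.ncard_pair hv, ← hsep]
    exact Set.ncard_le_ncard Set.inter_subset_left
  have hedges := ncard_inter_edgeSet_add_ncard_inter_edgeSet F hunion hedisj
  obtain ⟨p, hp⟩ := (graphRigid_coe_iff F).1 hFrigid
  rw [hFspan, Set.ncard_univ, Nat.card_eq_fintype_card] at hp
  have hsplit := rigidityRank_union_le p (F.edgeSet ∩ G₁.edgeSet) (F.edgeSet ∩ G₂.edgeSet)
  rw [inter_edgeSet_union_inter_edgeSet F hunion, hp] at hsplit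
  have ha := rigidityRank_le_ncard p (F.edgeSet ∩ G₁.edgeSet).toFinite
  have hb := rigidityRank_le_ncard p (F.edgeSet ∩ G₂.edgeSet).toFinite
  have hr₁ := rigidityRank_mono p (Set.inter_subset_right : F.edgeSet ∩ G₁.edgeSet ⊆ _)
  have hr₂ := rigidityRank_mono p (Set.inter_subset_right : F.edgeSet ∩ G₂.edgeSet ⊆ _)
  have hG₁ := G₁.rigidityRank_edgeSet_le p
  have hG₂ : rigidityRank p G₂.edgeSet < 2 * G₂.verts.ncard - 3 :=
    (G₂.rigidityRank_edgeSet_le p).lt_of_ne fun h => hG2 ((graphRigid_coe_iff G₂).2 ⟨p, h⟩)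
  exact ⟨by omega, by omega, (graphRigid_coe_iff G₁).2 ⟨p, by omega⟩⟩

/-- Let `(G₁, G₂)` be a 2-separation of a rigid graph `G` with `G₂` not rigid, and let
`F` be a spanning isostatic subgraph of `G`. Then `|E(F) ∩ E(G₁)| = 2|V(G₁)| − 3`,
`|E(F) ∩ E(G₂)| = 2|V(G₂)| − 4`, and in particular `G₁` is rigid. -/
theorem two_separation_nonrigid_side_count {V : Type*} [Fintype V] [DecidableEq V]
    (G : SimpleGraph V) (G₁ G₂ : G.Subgraph)
    (hunion : G₁ ⊔ G₂ = ⊤)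
    (hedisj : Disjoint G₁.edgeSet G₂.edgeSet)
    (hc1 : 3 ≤ G₁.verts.ncard) (hc2 : 3 ≤ G₂.verts.ncard)
    (v₁ v₂ : V) (hv : v₁ ≠ v₂) (hsep : G₁.verts ∩ G₂.verts = {v₁, v₂})
    (hGrigid : GraphRigid G) (hG2 : ¬ GraphRigid G₂.coe)
    (F : G.Subgraph) (hFspan : F.verts = Set.univ)
    (hFrigid : GraphRigid F.coe)
    (hFiso : F.edgeSet.ncard = 2 * Fintype.card V - 3) :
    (F.edgeSet ∩ G₁.edgeSet).ncard = 2 * G₁.verts.ncard - 3 ∧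
      (F.edgeSet ∩ G₂.edgeSet).ncard = 2 * G₂.verts.ncard - 4 ∧
      GraphRigid G₁.coe :=
  two_separation_nonrigid_side_count_general G G₁ G₂ hunion hedisj v₁ v₂ hv hsep hG2 F hFspan
    hFrigid hFiso
end
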